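/- arXiv:1608.04235 — 4 statements merged into one kernel-verified Lean document; each statement's English description precedes it below -/
import Mathlib

section
/- (Smithson's Arzelà–Ascoli theorem for uniform convergence on compacta, Hausdorff-metric hyperspace form.) Let X be a locally compact Hausdorff topological space and Y a metric space. Let 𝔉 be a set of continuous functions X → NonemptyCompacts Y (continuous point-compact multifunctions). Then 𝔉 is relatively compact in the topology of uniform convergence on compacta, i.e., the closure of the image of 𝔉 in UniformOnFun X (NonemptyCompacts Y) {K | IsCompact K} is compact, if and only if both: (AAucc1) 𝔉 is pointwise relatively compact, and (AAucc2) 𝔉 is equicontinuous. -/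
/-!
In the Hausdorff-metric hyperspace, a compact family of compact sets has compact union, and the
compact sets contained in a fixed compact set form a compact family. The first fact turns compact
closure of `𝔉` into pointwise relative compactness (evaluation at a point is continuous), the
second turns pointwise relative compactness into the hypothesis of the general Arzelà–Ascoli
theorem. Equicontinuity at `x₀` follows from total boundedness by an `ε/3` argument with a finite
net for uniform convergence on a compact neighbourhood of `x₀`.
-/

open TopologicalSpace

open Set Filter Topology

theorem TopologicalSpace.NonemptyCompacts.isCompact_closure_biUnion_coe {Y : Type*}
    [TopologicalSpace Y] [T2Space Y] {S : Set (NonemptyCompacts Y)} (hS : IsCompact (closure S)) :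
    IsCompact (closure (⋃ t ∈ S, (t : Set Y))) :=
  (isCompact_biUnion_coe_of_isCompact hS).closure_of_subset
    (biUnion_subset_biUnion_left subset_closure)

namespace UniformOnFun

theorem isCompact_closure_image_eval {X α : Type*} [UniformSpace α] [T2Space α]
    {𝔖 : Set (Set X)} {𝔉 : Set (X → α)} (h𝔉 : IsCompact (closure (ofFun 𝔖 '' 𝔉)))
    {K : Set X} (hK : K ∈ 𝔖) {x : X} (hx : x ∈ K) :
    IsCompact (closure ((fun f => f x) '' 𝔉)) := by
  refine (h𝔉.image (uniformContinuous_eval_of_mem α 𝔖 hx hK).continuous).closure_of_subset ?_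
  rintro _ ⟨f, hf, rfl⟩
  exact ⟨ofFun 𝔖 f, subset_closure (mem_image_of_mem _ hf), rfl⟩

theorem equicontinuousAt_of_totallyBounded {ι X α : Type*} [TopologicalSpace X]
    [PseudoMetricSpace α] {𝔖 : Set (Set X)} {F : ι → X → α}
    (hF : TotallyBounded (range (ofFun 𝔖 ∘ F))) {x₀ : X} (hcont : ∀ i, ContinuousAt (F i) x₀)
    {K : Set X} (hK : K ∈ 𝔖) (hKx₀ : K ∈ 𝓝 x₀) :
    EquicontinuousAt F x₀ := by
  rw [Metric.equicontinuousAt_iff_right]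
  intro ε hε
  have hε3 : 0 < ε / 3 := by positivity
  obtain ⟨t, htF, ht, hcover⟩ := totallyBounded_iff_subset.mp hF _
    (UniformOnFun.gen_mem_uniformity α 𝔖 hK (Metric.dist_mem_uniformity hε3))
  have hnet : ∀ i, ∃ g ∈ t, ∀ y ∈ K, dist (F i y) (toFun 𝔖 g y) < ε / 3 := fun i => by
    simpa [UniformOnFun.gen] using hcover (mem_range_self i)
  have hnear : ∀ g ∈ t, ∀ᶠ x in 𝓝 x₀, dist (toFun 𝔖 g x₀) (toFun 𝔖 g x) < ε / 3 := by
    intro g hg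
    obtain ⟨j, rfl⟩ := htF hg
    filter_upwards [hcont j (Metric.ball_mem_nhds _ hε3)] with x hx
    exact (dist_comm _ _).trans_lt hx
  filter_upwards [hKx₀, (biInter_mem ht).mpr hnear] with x hxK hx i
  obtain ⟨g, hg, hgi⟩ := hnet i
  calc dist (F i x₀) (F i x)
      ≤ dist (F i x₀) (toFun 𝔖 g x₀) + dist (toFun 𝔖 g x₀) (toFun 𝔖 g x)
          + dist (toFun 𝔖 g x) (F i x) := dist_triangle4 _ _ _ _
    _ < ε / 3 + ε / 3 + ε / 3 := by
        gcongr
        · exact hgi x₀ (mem_of_mem_nhds hKx₀)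
        · exact mem_iInter₂.mp hx g hg
        · rw [dist_comm]; exact hgi x hxK
    _ = ε := by ring

theorem isCompact_closure_image_ofFun {X α : Type*} [TopologicalSpace X]
    [UniformSpace α] [T2Space α] {𝔖 : Set (Set X)} (h𝔖 : ∀ K ∈ 𝔖, IsCompact K)
    {𝔉 : Set (X → α)} (hpt : ∀ x, ∃ Q, IsCompact Q ∧ ∀ f ∈ 𝔉, f x ∈ Q)
    (heq : Equicontinuous ((↑) : 𝔉 → X → α)) :
    IsCompact (closure (ofFun 𝔖 '' 𝔉)) := by
  have hrange : range (toFun 𝔖 ∘ ((↑) : ofFun 𝔖 '' 𝔉 → UniformOnFun X α 𝔖)) = 𝔉 := by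
    rw [range_comp, Subtype.range_coe, image_image]
    exact image_id' 𝔉
  refine ArzelaAscoli.isCompact_closure_of_isClosedEmbedding (F := toFun 𝔖) h𝔖
    IsClosedEmbedding.id (fun K _ => ?_) (fun K _ x _ => ?_)
  · exact (equicontinuous_iff_range.mpr (by rwa [hrange])).equicontinuousOn K
  · obtain ⟨Q, hQ, hfQ⟩ := hpt x
    exact ⟨Q, hQ, forall_mem_image.mpr hfQ⟩

end UniformOnFun

theorem arzelaAscoli_uniformOnCompacta_general
    {X : Type*} [TopologicalSpace X] [LocallyCompactSpace X]
    {Y : Type*} [MetricSpace Y]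
    (𝔉 : Set (X → NonemptyCompacts Y)) (hcont : ∀ f ∈ 𝔉, Continuous f) :
    IsCompact (closure
        ((UniformOnFun.ofFun {K : Set X | IsCompact K}) '' 𝔉 :
          Set (UniformOnFun X (NonemptyCompacts Y) {K : Set X | IsCompact K}))) ↔
      (∀ x : X, IsCompact (closure (⋃ f ∈ 𝔉, (f x : Set Y)))) ∧
        Equicontinuous (fun f : 𝔉 => (f : X → NonemptyCompacts Y)) := by
  constructor
  · intro h
    refine ⟨fun x => ?_, fun x₀ => ?_⟩
    · simpa only [biUnion_image] using NonemptyCompacts.isCompact_closure_biUnion_coe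
        (UniformOnFun.isCompact_closure_image_eval h isCompact_singleton (mem_singleton x))
    · obtain ⟨K, hK, hKx₀⟩ := exists_compact_mem_nhds x₀
      refine UniformOnFun.equicontinuousAt_of_totallyBounded (𝔖 := {K : Set X | IsCompact K}) ?_
        (fun f => (hcont f f.2).continuousAt) hK hKx₀
      rw [range_comp, Subtype.range_coe]
      exact h.totallyBounded.subset subset_closure
  · rintro ⟨hpt, heq⟩
    refine UniformOnFun.isCompact_closure_image_ofFun (fun K hK => hK) (fun x => ?_) heq
    exact ⟨_, NonemptyCompacts.isCompact_subsets_of_isCompact (hpt x),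
      fun f hf => (subset_biUnion_of_mem (u := fun f => (f x : Set Y)) hf).trans subset_closure⟩

/-- Smithson's Arzelà–Ascoli theorem for uniform convergence on compacta,
Hausdorff-metric hyperspace form: a family `𝔉` of continuous point-compact multifunctions
from a locally compact Hausdorff space `X` to a metric space `Y` is relatively compact in the
topology of uniform convergence on compacta iff it is pointwise relatively compact and
equicontinuous. -/
theorem arzelaAscoli_uniformOnCompacta
    {X : Type*} [TopologicalSpace X] [LocallyCompactSpace X] [T2Space X]
    {Y : Type*} [MetricSpace Y]
    (𝔉 : Set (X → NonemptyCompacts Y)) (hcont : ∀ f ∈ 𝔉, Continuous f) :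
    IsCompact (closure
        ((UniformOnFun.ofFun {K : Set X | IsCompact K}) '' 𝔉 :
          Set (UniformOnFun X (NonemptyCompacts Y) {K : Set X | IsCompact K}))) ↔
      (∀ x : X, IsCompact (closure (⋃ f ∈ 𝔉, (f x : Set Y)))) ∧
        Equicontinuous (fun f : 𝔉 => (f : X → NonemptyCompacts Y)) :=
  arzelaAscoli_uniformOnCompacta_general 𝔉 hcont
end

section
/- (Arzelà–Ascoli theorem for uniform convergence, Hausdorff-metric hyperspace form; main theorem.) Let X be a locally compact Hausdorff topological space and Y a metric space. Let 𝔉 be a set of continuous functions X → NonemptyCompacts Y (continuous point-compact multifunctions). Then 𝔉 is relatively compact in the topology of uniform convergence, i.e., the closure of the image of 𝔉 in UniformFun X (NonemptyCompacts Y) is compact, if and only if both: (AA1) 𝔉 is pointwise relatively compact and equicontinuous, and (AA2) 𝔉 satisfies the finite extension property. -/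
open TopologicalSpace

/-- A family `𝔉` of point-compact multifunctions (functions into `NonemptyCompacts Y`) has the
finite extension property if for every `ε > 0` there are a finite set `D ⊆ X` and `δ > 0` such
that any two members of `𝔉` that are `δ`-close (in Hausdorff distance) on `D` are `ε`-close
everywhere. -/
def FiniteExtensionProperty {X Y : Type*} [MetricSpace Y]
    (𝔉 : Set (X → NonemptyCompacts Y)) : Prop :=
  ∀ ε > (0 : ℝ), ∃ D : Set X, D.Finite ∧ ∃ δ > (0 : ℝ),
    ∀ f ∈ 𝔉, ∀ g ∈ 𝔉, (∀ x ∈ D, dist (f x) (g x) < δ) → ∀ x : X, dist (f x) (g x) < ε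

/-!
Everything goes through total boundedness for uniform convergence. A totally bounded family is
uniformly close to a finite subfamily, which is equicontinuous; and finitely many points of `X`
detect every large distance between two members of that finite net, which yields the finite
extension property. Conversely, the finite extension property turns `δ`-nets for the restrictions
to a finite set `D` (which lie in a compact product) into uniform `ε`-nets, while pointwise
compactness makes the closure complete. Pointwise relative compactness in the Hausdorff metric is
relative compactness of the union, since the nonempty compact subsets of a compact set form a
compact set and the union of a compact family of compact sets is compact.
-/

open Set Filter Topology
open scoped UniformConvergence

theorem Set.Finite.exists_finite_forall_imp_forall {ι α : Type*} {t : Set ι} (ht : t.Finite)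
    (P : ι → α → Prop) :
    ∃ D : Set α, D.Finite ∧ ∀ i ∈ t, (∀ x ∈ D, P i x) → ∀ x, P i x := by
  have (i : ι) : ∃ D : Set α, D.Finite ∧ ((∀ x ∈ D, P i x) → ∀ x, P i x) := by
    by_cases h : ∀ x, P i x
    · exact ⟨∅, finite_empty, fun _ => h⟩
    · obtain ⟨x, hx⟩ := not_forall.mp h
      exact ⟨{x}, finite_singleton x, fun hD => absurd (hD x rfl) hx⟩
  choose D hDfin hD using this
  exact ⟨⋃ i ∈ t, D i, ht.biUnion fun i _ => hDfin i,
    fun i hi h => hD i fun x hx => h x (mem_biUnion hi hx)⟩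

namespace TopologicalSpace.NonemptyCompacts

variable {α : Type*} [TopologicalSpace α] [T2Space α]

theorem isCompact_closure_iff_isCompact_closure_biUnion {𝒦 : Set (NonemptyCompacts α)} :
    IsCompact (closure 𝒦) ↔ IsCompact (closure (⋃ K ∈ 𝒦, (K : Set α))) := by
  refine ⟨fun h => ?_, fun h => ?_⟩
  · exact (isCompact_biUnion_coe_of_isCompact h).closure_of_subset
      (biUnion_subset_biUnion_left subset_closure)
  · exact (isCompact_subsets_of_isCompact h).closure_of_subset fun K hK =>
      (subset_biUnion_of_mem (u := fun K : NonemptyCompacts α => (K : Set α)) hK).trans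
        subset_closure

end TopologicalSpace.NonemptyCompacts

theorem exists_finite_net_on_finite_set {X β : Type*} [PseudoMetricSpace β] {S : Set (X → β)}
    {D : Set X} (hD : D.Finite)
    (hS : ∀ x, IsCompact (closure ((fun f => f x) '' S))) {δ : ℝ} (hδ : 0 < δ) :
    ∃ t ⊆ S, t.Finite ∧ ∀ f ∈ S, ∃ g ∈ t, ∀ x ∈ D, dist (f x) (g x) < δ := by
  have : Fintype D := hD.fintype
  let restrict : (X → β) → (D → β) := fun f x => f x
  have hbounded : TotallyBounded (restrict '' S) :=
    (isCompact_univ_pi fun x : D => hS x).totallyBounded.subset <| by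
      rintro _ ⟨f, hf, rfl⟩ x -
      exact subset_closure (mem_image_of_mem _ hf)
  obtain ⟨t, htS, htfin, hcover⟩ :=
    exists_subset_image_finite_and.mp (Metric.finite_approx_of_totallyBounded hbounded δ hδ)
  refine ⟨t, htS, htfin, fun f hf => ?_⟩
  obtain ⟨_, ⟨g, hg, rfl⟩, hfg⟩ := mem_iUnion₂.mp (hcover (mem_image_of_mem restrict hf))
  exact ⟨g, hg, fun x hx => (dist_pi_lt_iff hδ).mp hfg ⟨x, hx⟩⟩

namespace UniformFun

section PseudoMetric

variable {X β : Type*} [PseudoMetricSpace β]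

theorem totallyBounded_image_ofFun_iff {S : Set (X → β)} :
    TotallyBounded (ofFun '' S : Set (X →ᵤ β)) ↔
      ∀ ε > 0, ∃ t ⊆ S, t.Finite ∧ ∀ f ∈ S, ∃ g ∈ t, ∀ x, dist (f x) (g x) < ε := by
  have hbasis := UniformFun.hasBasis_uniformity_of_basis X β Metric.uniformity_basis_dist
  constructor
  · intro hS ε hε
    obtain ⟨t, htS, htfin, hcover⟩ := exists_subset_image_finite_and.mp <|
      totallyBounded_iff_subset.mp hS _ (hbasis.mem_of_mem hε)
    refine ⟨t, htS, htfin, fun f hf => ?_⟩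
    obtain ⟨_, ⟨g, hg, rfl⟩, hfg⟩ := mem_iUnion₂.mp (hcover (mem_image_of_mem ofFun hf))
    exact ⟨g, hg, hfg⟩
  · intro h
    refine hbasis.totallyBounded_iff.mpr fun ε hε => ?_
    obtain ⟨t, -, htfin, hnet⟩ := h ε hε
    refine ⟨ofFun '' t, htfin.image _, ?_⟩
    rintro _ ⟨f, hf, rfl⟩
    obtain ⟨g, hg, hfg⟩ := hnet f hf
    exact mem_biUnion (mem_image_of_mem ofFun hg) hfg

theorem equicontinuous_of_totallyBounded [TopologicalSpace X] {S : Set (X → β)}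
    (hcont : ∀ f ∈ S, Continuous f) (hS : TotallyBounded (ofFun '' S : Set (X →ᵤ β))) :
    Equicontinuous (fun f : S => (f : X → β)) := by
  intro x₀
  rw [Metric.equicontinuousAt_iff_right]
  intro ε hε
  obtain ⟨t, htS, htfin, hnet⟩ := totallyBounded_image_ofFun_iff.mp hS (ε / 3) (by positivity)
  have : Finite t := htfin
  have hnear : ∀ᶠ y in 𝓝 x₀, ∀ g : t, dist (g.1 x₀) (g.1 y) < ε / 3 :=
    Metric.equicontinuousAt_iff_right.mp
      (equicontinuousAt_finite.mpr fun g : t => (hcont g (htS g.2)).continuousAt) _ (by positivity)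
  filter_upwards [hnear] with y hy f
  obtain ⟨g, hg, hfg⟩ := hnet f f.2
  calc dist (f.1 x₀) (f.1 y)
      ≤ dist (f.1 x₀) (g x₀) + dist (g x₀) (g y) + dist (g y) (f.1 y) := dist_triangle4 _ _ _ _
    _ < ε / 3 + ε / 3 + ε / 3 := by
        gcongr
        · exact hfg x₀
        · exact hy ⟨g, hg⟩
        · exact dist_comm (f.1 y) (g y) ▸ hfg y
    _ = ε := by ring

end PseudoMetric

theorem isCompact_closure_image_eval {X β : Type*} [UniformSpace β] {S : Set (X → β)}
    (hS : IsCompact (closure (ofFun '' S : Set (X →ᵤ β)))) (x : X) :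
    IsCompact (closure ((fun f => f x) '' S)) := by
  refine (hS.image (uniformContinuous_eval β x).continuous).closure_of_subset ?_
  exact fun _ ⟨f, hf, hfx⟩ => ⟨ofFun f, subset_closure (mem_image_of_mem _ hf), hfx⟩

theorem isComplete_closure_image_ofFun {X β : Type*} [UniformSpace β] {S : Set (X → β)}
    (hS : ∀ x, IsComplete (closure ((fun f => f x) '' S))) :
    IsComplete (closure (ofFun '' S : Set (X →ᵤ β))) := by
  intro F hF hFS
  have : F.NeBot := hF.1
  have hmaps (x : X) : Tendsto (fun f => toFun f x) F (𝓟 (closure ((fun f => f x) '' S))) := by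
    refine tendsto_principal.mpr (mem_of_superset (le_principal_iff.mp hFS) fun f hf => ?_)
    have := image_closure_subset_closure_image (uniformContinuous_eval β x).continuous
      (mem_image_of_mem _ hf)
    rwa [← image_comp] at this
  have hlim (x : X) : ∃ y, Tendsto (fun f => toFun f x) F (𝓝 y) :=
    (hS x _ (hF.map (uniformContinuous_eval β x)) (hmaps x)).imp fun _ => And.right
  choose g hg using hlim
  have hFg : F ≤ 𝓝 (ofFun g) := by
    rw [(UniformFun.hasBasis_nhds_of_basis X β (ofFun g) uniformity_hasBasis_closed).ge_iff]
    rintro U ⟨hU, hUc⟩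
    obtain ⟨V, hV, hVU⟩ :=
      (cauchy_iff.mp hF).2 _ ((UniformFun.hasBasis_uniformity X β).mem_of_mem hU)
    filter_upwards [hV] with f hf x
    refine hUc.mem_of_tendsto ((hg x).prodMk_nhds tendsto_const_nhds) ?_
    filter_upwards [hV] with f' hf' using hVU (mk_mem_prod hf' hf) x
  exact ⟨ofFun g, isClosed_closure.mem_of_tendsto hFg (le_principal_iff.mp hFS), hFg⟩

end UniformFun

namespace FiniteExtensionProperty

variable {X Y : Type*} [MetricSpace Y] {𝔉 : Set (X → NonemptyCompacts Y)}

theorem of_totallyBounded (h𝔉 : TotallyBounded (UniformFun.ofFun '' 𝔉 : Set (X →ᵤ _))) :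
    FiniteExtensionProperty 𝔉 := by
  intro ε hε
  obtain ⟨t, -, htfin, hnet⟩ :=
    UniformFun.totallyBounded_image_ofFun_iff.mp h𝔉 (ε / 6) (by positivity)
  obtain ⟨D, hD, hDt⟩ := (htfin.prod htfin).exists_finite_forall_imp_forall
    fun p x => dist (p.1 x) (p.2 x) ≤ ε / 2
  refine ⟨D, hD, ε / 6, by positivity, fun f hf g hg hfg x => ?_⟩
  obtain ⟨f₁, hf₁, hff₁⟩ := hnet f hf
  obtain ⟨g₁, hg₁, hgg₁⟩ := hnet g hg
  have hnet_close : ∀ y, dist (f₁ y) (g₁ y) ≤ ε / 2 := by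
    refine hDt (f₁, g₁) ⟨hf₁, hg₁⟩ fun y hy => ?_
    calc dist (f₁ y) (g₁ y) ≤ dist (f₁ y) (f y) + dist (f y) (g y) + dist (g y) (g₁ y) :=
          dist_triangle4 _ _ _ _
      _ ≤ ε / 6 + ε / 6 + ε / 6 := by
          rw [dist_comm (f₁ y)]
          gcongr
          exacts [(hff₁ y).le, (hfg y hy).le, (hgg₁ y).le]
      _ = ε / 2 := by ring
  calc dist (f x) (g x) ≤ dist (f x) (f₁ x) + dist (f₁ x) (g₁ x) + dist (g₁ x) (g x) :=
        dist_triangle4 _ _ _ _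
    _ < ε := by linarith [hff₁ x, hnet_close x, dist_comm (g₁ x) (g x) ▸ hgg₁ x]

theorem totallyBounded_image_ofFun (h : FiniteExtensionProperty 𝔉)
    (hpt : ∀ x, IsCompact (closure ((fun f => f x) '' 𝔉))) :
    TotallyBounded (UniformFun.ofFun '' 𝔉 : Set (X →ᵤ _)) := by
  refine UniformFun.totallyBounded_image_ofFun_iff.mpr fun ε hε => ?_
  obtain ⟨D, hD, δ, hδ, hext⟩ := h ε hε
  obtain ⟨t, ht𝔉, htfin, hnet⟩ := exists_finite_net_on_finite_set hD hpt hδ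
  refine ⟨t, ht𝔉, htfin, fun f hf => ?_⟩
  obtain ⟨g, hg, hfg⟩ := hnet f hf
  exact ⟨g, hg, hext f hf g (ht𝔉 hg) hfg⟩

end FiniteExtensionProperty

theorem arzelaAscoli_uniformConvergence_general
    {X : Type*} [TopologicalSpace X]
    {Y : Type*} [MetricSpace Y]
    (𝔉 : Set (X → NonemptyCompacts Y)) (hcont : ∀ f ∈ 𝔉, Continuous f) :
    IsCompact (closure
        (UniformFun.ofFun '' 𝔉 : Set (UniformFun X (NonemptyCompacts Y)))) ↔
      ((∀ x : X, IsCompact (closure (⋃ f ∈ 𝔉, (f x : Set Y)))) ∧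
          Equicontinuous (fun f : 𝔉 => (f : X → NonemptyCompacts Y))) ∧
        FiniteExtensionProperty 𝔉 := by
  have hpointwise (x : X) : IsCompact (closure (⋃ f ∈ 𝔉, (f x : Set Y))) ↔
      IsCompact (closure ((fun f => f x) '' 𝔉)) := by
    rw [NonemptyCompacts.isCompact_closure_iff_isCompact_closure_biUnion, biUnion_image]
  simp only [hpointwise]
  constructor
  · intro h
    have h𝔉 := h.totallyBounded.subset subset_closure
    exact ⟨⟨UniformFun.isCompact_closure_image_eval h,
      UniformFun.equicontinuous_of_totallyBounded hcont h𝔉⟩,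
      FiniteExtensionProperty.of_totallyBounded h𝔉⟩
  · rintro ⟨⟨hpt, -⟩, hfep⟩
    exact isCompact_iff_totallyBounded_isComplete.mpr
      ⟨(hfep.totallyBounded_image_ofFun hpt).closure,
        UniformFun.isComplete_closure_image_ofFun fun x => (hpt x).isComplete⟩

/-- Arzelà–Ascoli theorem for uniform convergence, Hausdorff-metric hyperspace
form: a family `𝔉` of continuous point-compact multifunctions from a locally compact
Hausdorff space `X` to a metric space `Y` is relatively compact in the topology of uniform
convergence iff it is pointwise relatively compact, equicontinuous, and satisfies the finite
extension property. -/
theorem arzelaAscoli_uniformConvergence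
    {X : Type*} [TopologicalSpace X] [LocallyCompactSpace X] [T2Space X]
    {Y : Type*} [MetricSpace Y]
    (𝔉 : Set (X → NonemptyCompacts Y)) (hcont : ∀ f ∈ 𝔉, Continuous f) :
    IsCompact (closure
        (UniformFun.ofFun '' 𝔉 : Set (UniformFun X (NonemptyCompacts Y)))) ↔
      ((∀ x : X, IsCompact (closure (⋃ f ∈ 𝔉, (f x : Set Y)))) ∧
          Equicontinuous (fun f : 𝔉 => (f : X → NonemptyCompacts Y))) ∧
        FiniteExtensionProperty 𝔉 :=
  arzelaAscoli_uniformConvergence_general 𝔉 hcont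
end

section
/- Let X be a locally compact Hausdorff topological space and Y a metric space. Let 𝔉 be a set of continuous functions X → NonemptyCompacts Y that is pointwise relatively compact and equicontinuous. Then the following are equivalent: (C1) 𝔉 is relatively compact in the topology of uniform convergence, i.e., the closure of the image of 𝔉 in UniformFun X (NonemptyCompacts Y) is compact; (C2) 𝔉 satisfies the finite extension property; (C3) 𝔉 satisfies the compact extension property. -/
/-!
By Arzelà–Ascoli, pointwise relative compactness and equicontinuity make `𝔉` relatively compact
for uniform convergence on compact sets. For (C1) ⇒ (C2), take a finite `ε/8`-net of `𝔉` for
uniform convergence and let `D` contain, for each pair of net members that are `ε/2`-apart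
somewhere, one point where they are. Conversely, the compact extension property passes to the
closure of `𝔉` for compact convergence, where it makes the identity into the topology of uniform
convergence continuous; the image of that compact closure is then a compact set containing `𝔉`.
-/

open TopologicalSpace

def CompactExtensionProperty {X Y : Type*} [TopologicalSpace X] [MetricSpace Y]
    (𝔉 : Set (X → NonemptyCompacts Y)) : Prop :=
  ∀ ε > (0 : ℝ), ∃ K : Set X, IsCompact K ∧ ∃ δ > (0 : ℝ),
    ∀ f ∈ 𝔉, ∀ g ∈ 𝔉, (∀ x ∈ K, dist (f x) (g x) < δ) → ∀ x : X, dist (f x) (g x) < ε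

open Metric Set Filter
open scoped UniformConvergence

section UniformApproximation

variable {X α : Type*} [PseudoMetricSpace α] {𝔉 : Set (X → α)}

theorem exists_finite_subset_forall_dist_lt_of_totallyBounded
    (h : TotallyBounded (UniformFun.ofFun '' 𝔉)) {r : ℝ} (hr : 0 < r) :
    ∃ t ⊆ 𝔉, t.Finite ∧ ∀ f ∈ 𝔉, ∃ u ∈ t, ∀ x, dist (f x) (u x) < r := by
  obtain ⟨t, ht𝔉, htfin, hcover⟩ := totallyBounded_iff_subset.mp h _
    ((UniformFun.hasBasis_uniformity_of_basis X α uniformity_basis_dist).mem_of_mem hr)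
  obtain ⟨t, ht, rfl⟩ := subset_image_iff.mp ht𝔉
  refine ⟨t, ht, htfin.of_finite_image UniformFun.ofFun.injective.injOn, fun f hf => ?_⟩
  obtain ⟨_, ⟨u, hu, rfl⟩, hfu⟩ := mem_iUnion₂.mp (hcover (mem_image_of_mem _ hf))
  exact ⟨u, hu, hfu⟩

theorem exists_dist_lt_of_mem_closure_uniformOnFun {𝔖 : Set (Set X)}
    {f : X →ᵤ[𝔖] α} (hf : f ∈ closure (UniformOnFun.ofFun 𝔖 '' 𝔉))
    {K : Set X} (hK : K ∈ 𝔖) {r : ℝ} (hr : 0 < r) :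
    ∃ f₀ ∈ 𝔉, ∀ x ∈ K, dist (UniformOnFun.toFun 𝔖 f x) (f₀ x) < r := by
  obtain ⟨_, hg, f₀, hf₀, rfl⟩ := mem_closure_iff_nhds.mp hf _
    (UniformOnFun.gen_mem_nhds α 𝔖 f hK (dist_mem_uniformity hr))
  exact ⟨f₀, hf₀, hg⟩

theorem dist_le_of_mem_closure_uniformOnFun [TopologicalSpace X]
    {K : Set X} (hK : IsCompact K) {δ ε : ℝ} (hδ : 0 < δ)
    (hext : ∀ f ∈ 𝔉, ∀ g ∈ 𝔉, (∀ x ∈ K, dist (f x) (g x) < δ) → ∀ x, dist (f x) (g x) < ε)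
    {f g : X →ᵤ[{K : Set X | IsCompact K}] α}
    (hf : f ∈ closure (UniformOnFun.ofFun {K : Set X | IsCompact K} '' 𝔉))
    (hg : g ∈ closure (UniformOnFun.ofFun {K : Set X | IsCompact K} '' 𝔉))
    (hfg : ∀ x ∈ K, dist (UniformOnFun.toFun _ f x) (UniformOnFun.toFun _ g x) < δ / 2) (x : X) :
    dist (UniformOnFun.toFun _ f x) (UniformOnFun.toFun _ g x) ≤ ε := by
  set F := UniformOnFun.toFun {K : Set X | IsCompact K} f
  set G := UniformOnFun.toFun {K : Set X | IsCompact K} g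
  refine le_of_forall_pos_lt_add fun η hη => ?_
  set r := min (δ / 4) (η / 2)
  have hr : 0 < r := by positivity
  obtain ⟨f₀, hf₀, hFf₀⟩ := exists_dist_lt_of_mem_closure_uniformOnFun hf (hK.insert x) hr
  obtain ⟨g₀, hg₀, hGg₀⟩ := exists_dist_lt_of_mem_closure_uniformOnFun hg (hK.insert x) hr
  have hK₀ : ∀ y ∈ K, dist (f₀ y) (g₀ y) < δ := fun y hy => by
    have h₁ := hFf₀ y (mem_insert_of_mem x hy)
    have h₂ := hGg₀ y (mem_insert_of_mem x hy)
    have h₃ := hfg y hy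
    have h₄ := min_le_left (δ / 4) (η / 2)
    calc dist (f₀ y) (g₀ y) ≤ dist (F y) (f₀ y) + dist (F y) (G y) + dist (G y) (g₀ y) := by
          rw [dist_comm (F y)]; exact dist_triangle4 _ _ _ _
      _ < δ := by linarith
  have h₁ := hFf₀ x (mem_insert x K)
  have h₂ := hGg₀ x (mem_insert x K)
  have h₃ := hext f₀ hf₀ g₀ hg₀ hK₀ x
  have h₄ := min_le_right (δ / 4) (η / 2)
  calc dist (F x) (G x) ≤ dist (F x) (f₀ x) + dist (f₀ x) (g₀ x) + dist (G x) (g₀ x) := by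
        rw [dist_comm (G x)]; exact dist_triangle4 _ _ _ _
    _ < ε + η := by linarith

end UniformApproximation

section NonemptyCompacts

variable {X Y : Type*} [MetricSpace Y] {𝔉 : Set (X → NonemptyCompacts Y)}

theorem finiteExtensionProperty_of_totallyBounded
    (h : TotallyBounded (UniformFun.ofFun '' 𝔉)) : FiniteExtensionProperty 𝔉 := by
  intro ε hε
  obtain ⟨t, -, htfin, hnet⟩ :=
    exists_finite_subset_forall_dist_lt_of_totallyBounded h (by positivity : 0 < ε / 8)
  set far := {p ∈ t ×ˢ t | ∃ x, ε / 2 < dist (p.1 x) (p.2 x)}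
  have : Finite far := ((htfin.prod htfin).subset (sep_subset _ _)).to_subtype
  choose w hw using fun p : far => p.2.2
  refine ⟨range w, finite_range w, ε / 8, by positivity, fun f hf g hg hfg x => ?_⟩
  obtain ⟨u, hu, hfu⟩ := hnet f hf
  obtain ⟨v, hv, hgv⟩ := hnet g hg
  have huv : ∀ y, dist (u y) (v y) ≤ ε / 2 := by
    by_contra! ⟨y, hy⟩
    let p : far := ⟨(u, v), mk_mem_prod hu hv, y, hy⟩
    have h₁ := hfg (w p) (mem_range_self p)
    have h₂ := hfu (w p)
    have h₃ := hgv (w p)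
    have h₄ : ε / 2 < dist (u (w p)) (v (w p)) := hw p
    have := dist_triangle4 (u (w p)) (f (w p)) (g (w p)) (v (w p))
    have := dist_comm (u (w p)) (f (w p))
    linarith
  have h₁ := hfu x
  have h₂ := hgv x
  have h₃ := huv x
  have := dist_triangle4 (f x) (u x) (v x) (g x)
  have := dist_comm (v x) (g x)
  linarith

theorem FiniteExtensionProperty.compactExtensionProperty [TopologicalSpace X]
    (h : FiniteExtensionProperty 𝔉) :
    CompactExtensionProperty 𝔉 := fun ε hε =>
  let ⟨D, hD, hδ⟩ := h ε hε
  ⟨D, hD.isCompact, hδ⟩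

variable [TopologicalSpace X]

theorem isCompact_closure_uniformOnFun_of_equicontinuous
    (hptwise : ∀ x : X, IsCompact (closure (⋃ f ∈ 𝔉, (f x : Set Y))))
    (hequi : Equicontinuous (fun f : 𝔉 => (f : X → NonemptyCompacts Y))) :
    IsCompact (closure (UniformOnFun.ofFun {K : Set X | IsCompact K} '' 𝔉)) := by
  refine ArzelaAscoli.isCompact_closure_of_isClosedEmbedding (𝔖 := {K : Set X | IsCompact K})
    (F := UniformOnFun.toFun _) (fun _ hK => hK) .id (fun K _ => ?_) fun K _ x _ =>
      ⟨_, NonemptyCompacts.isCompact_subsets_of_isCompact (hptwise x), ?_⟩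
  · exact (hequi.comp fun g => ⟨_, by obtain ⟨_, f, hf, rfl⟩ := g; exact hf⟩).equicontinuousOn K
  · rintro _ ⟨f, hf, rfl⟩
    exact (subset_biUnion_of_mem (u := fun f : X → NonemptyCompacts Y => (f x : Set Y)) hf).trans
      subset_closure

theorem CompactExtensionProperty.continuousOn_closure_uniformOnFun
    (h : CompactExtensionProperty 𝔉) :
    ContinuousOn (fun f => UniformFun.ofFun (UniformOnFun.toFun {K : Set X | IsCompact K} f))
      (closure (UniformOnFun.ofFun {K : Set X | IsCompact K} '' 𝔉)) := by
  intro f hf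
  rw [ContinuousWithinAt,
    (UniformFun.hasBasis_nhds_of_basis X _ _ uniformity_basis_dist).tendsto_right_iff]
  intro ε hε
  obtain ⟨K, hK, δ, hδ, hext⟩ := h (ε / 2) (by positivity)
  filter_upwards [self_mem_nhdsWithin, nhdsWithin_le_nhds
    (UniformOnFun.gen_mem_nhds _ _ f hK (dist_mem_uniformity (half_pos hδ)))] with g hg hfg x
  exact (dist_le_of_mem_closure_uniformOnFun hK hδ hext hf hg hfg x).trans_lt (half_lt_self hε)

theorem CompactExtensionProperty.isCompact_closure_uniformFun
    (h : CompactExtensionProperty 𝔉)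
    (hT : IsCompact (closure (UniformOnFun.ofFun {K : Set X | IsCompact K} '' 𝔉))) :
    IsCompact (closure (UniformFun.ofFun '' 𝔉)) := by
  refine (hT.image_of_continuousOn h.continuousOn_closure_uniformOnFun).closure_of_subset ?_
  rintro _ ⟨f, hf, rfl⟩
  exact ⟨UniformOnFun.ofFun _ f, subset_closure (mem_image_of_mem _ hf), rfl⟩

end NonemptyCompacts

theorem extensionProperties_tfae_general
    {X : Type*} [TopologicalSpace X]
    {Y : Type*} [MetricSpace Y]
    (𝔉 : Set (X → NonemptyCompacts Y))
    (hptwise : ∀ x : X, IsCompact (closure (⋃ f ∈ 𝔉, (f x : Set Y))))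
    (hequi : Equicontinuous (fun f : 𝔉 => (f : X → NonemptyCompacts Y))) :
    List.TFAE
      [IsCompact (closure
          (UniformFun.ofFun '' 𝔉 : Set (UniformFun X (NonemptyCompacts Y)))),
        FiniteExtensionProperty 𝔉,
        CompactExtensionProperty 𝔉] := by
  tfae_have 1 → 2
  | h => finiteExtensionProperty_of_totallyBounded (h.totallyBounded.subset subset_closure)
  tfae_have 2 → 3 := FiniteExtensionProperty.compactExtensionProperty
  tfae_have 3 → 1
  | h => h.isCompact_closure_uniformFun
    (isCompact_closure_uniformOnFun_of_equicontinuous hptwise hequi)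
  tfae_finish

/-- for a pointwise relatively compact and equicontinuous family `𝔉` of continuous
point-compact multifunctions on a locally compact Hausdorff space, relative compactness in the
topology of uniform convergence, the finite extension property and the compact extension
property are all equivalent. -/
theorem extensionProperties_tfae
    {X : Type*} [TopologicalSpace X] [LocallyCompactSpace X] [T2Space X]
    {Y : Type*} [MetricSpace Y]
    (𝔉 : Set (X → NonemptyCompacts Y)) (hcont : ∀ f ∈ 𝔉, Continuous f)
    (hptwise : ∀ x : X, IsCompact (closure (⋃ f ∈ 𝔉, (f x : Set Y))))
    (hequi : Equicontinuous (fun f : 𝔉 => (f : X → NonemptyCompacts Y))) :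
    List.TFAE
      [IsCompact (closure
          (UniformFun.ofFun '' 𝔉 : Set (UniformFun X (NonemptyCompacts Y)))),
        FiniteExtensionProperty 𝔉,
        CompactExtensionProperty 𝔉] :=
  extensionProperties_tfae_general 𝔉 hptwise hequi
end

section
/- Let X be a type, Y a metric space, and 𝔉 a set of functions X → NonemptyCompacts Y satisfying the finite extension property. Then on 𝔉 the topology of pointwise convergence coincides with the topology of uniform convergence: the topology induced on the subtype 𝔉 by the product (pointwise convergence) topology on X → NonemptyCompacts Y equals the topology induced on 𝔉 by UniformFun X (NonemptyCompacts Y). -/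
/-!
Uniform convergence always implies pointwise convergence. Conversely, by the finite extension
property, uniform `ε`-closeness to `f` on `X` follows from `δ`-closeness on a finite set `D`,
and the latter is a condition on finitely many coordinates, hence holds on a pointwise
neighbourhood of `f`.
-/

open TopologicalSpace

open Filter Topology

theorem UniformFun.induced_le_induced_pi {ι α β : Type*} [UniformSpace β] (φ : ι → α → β) :
    induced (UniformFun.ofFun ∘ φ) (UniformFun.topologicalSpace α β) ≤
      induced φ Pi.topologicalSpace := by
  have htoFun := continuous_iff_le_induced.mp
    (UniformFun.uniformContinuous_toFun (α := α) (β := β)).continuous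
  calc induced (UniformFun.ofFun ∘ φ) (UniformFun.topologicalSpace α β)
      ≤ induced (UniformFun.ofFun ∘ φ) (induced UniformFun.toFun Pi.topologicalSpace) :=
        induced_mono htoFun
    _ = induced φ Pi.topologicalSpace := induced_compose

theorem continuous_subtype_ofFun_of_finite_extension {X Z : Type*} [PseudoMetricSpace Z]
    {𝔉 : Set (X → Z)}
    (h𝔉 : ∀ ε > (0 : ℝ), ∃ D : Set X, D.Finite ∧ ∃ δ > (0 : ℝ),
      ∀ f ∈ 𝔉, ∀ g ∈ 𝔉, (∀ x ∈ D, dist (f x) (g x) < δ) → ∀ x : X, dist (f x) (g x) < ε) :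
    Continuous (fun f : 𝔉 => UniformFun.ofFun (f : X → Z)) := by
  refine continuous_iff_continuousAt.mpr fun f => ?_
  refine UniformFun.tendsto_iff_tendstoUniformly.mpr (Metric.tendstoUniformly_iff.mpr ?_)
  intro ε hε
  obtain ⟨D, hD, δ, hδ, hextend⟩ := h𝔉 ε hε
  have hnear : ∀ᶠ g : 𝔉 in 𝓝 f, ∀ x ∈ D, dist (f.1 x) (g.1 x) < δ := by
    refine (eventually_all_finite hD).mpr fun x _ => ?_
    have hx : Tendsto (fun g : 𝔉 => g.1 x) (𝓝 f) (𝓝 (f.1 x)) :=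
      ((continuous_apply x).comp continuous_subtype_val).continuousAt
    simpa only [dist_comm] using Metric.tendsto_nhds.mp hx δ hδ
  exact hnear.mono fun g hg => hextend f f.2 g g.2 hg

/-- if `𝔉` satisfies the finite extension property, then on `𝔉` the topology of
pointwise convergence coincides with the topology of uniform convergence. -/
theorem fep_pointwise_eq_uniform
    {X : Type*} {Y : Type*} [MetricSpace Y]
    (𝔉 : Set (X → NonemptyCompacts Y)) (hfep : FiniteExtensionProperty 𝔉) :
    TopologicalSpace.induced (fun f : 𝔉 => (f : X → NonemptyCompacts Y))
        (Pi.topologicalSpace) =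
      TopologicalSpace.induced (fun f : 𝔉 => UniformFun.ofFun (f : X → NonemptyCompacts Y))
        (inferInstance : TopologicalSpace (UniformFun X (NonemptyCompacts Y))) :=
  le_antisymm (continuous_iff_le_induced.mp (continuous_subtype_ofFun_of_finite_extension hfep))
    (UniformFun.induced_le_induced_pi _)
end
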